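/- Let ω ∈ ℝⁿ and let Λ := span_ℝ {k ∈ ℤⁿ : k·ω = 0}. Then the orthogonal complement Λ⊥ is the minimal rational subspace of ℝⁿ containing ω, i.e., Λ⊥ contains ω, Λ⊥ is spanned by its intersection with ℤⁿ (equivalently by vectors with rational coordinates), and any subspace of ℝⁿ spanned by rational vectors and containing ω contains Λ⊥. -/

import Mathlib

/-! Over `ℚ` the dot product is anisotropic, so every subspace `U ⊆ ℚⁿ` satisfies
`ℚⁿ = U ⊕ U^⊥`. Taking `U` the rational span of a set `S` of rational vectors and passing to `ℝⁿ`,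
this gives `ℝⁿ = span S + W` with `W` the span of the rational points of `(span S)ᗮ`; since
`W ≤ (span S)ᗮ`, the modular law forces `(span S)ᗮ = W`, and clearing denominators turns rational
points into integer points. For `S` the integer vectors orthogonal to `ω` this shows that `Λᗮ` is
spanned by its integer points. If `V = span S` is rational and contains `ω`, the integer points of
`Vᗮ` are orthogonal to `ω`, so `Vᗮ ≤ Λ` and hence `Λᗮ ≤ Vᗮᗮ = V`. -/

open Submodule Set

namespace Submodule

variable {𝕜 E : Type*} [RCLike 𝕜] [NormedAddCommGroup E] [InnerProductSpace 𝕜 E]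

theorem orthogonal_eq_of_le_of_sup_eq_top {K W : Submodule 𝕜 E} (hW : W ≤ Kᗮ)
    (hKW : K ⊔ W = ⊤) : Kᗮ = W :=
  calc Kᗮ = Kᗮ ⊓ (K ⊔ W) := by rw [hKW, inf_top_eq]
    _ = Kᗮ ⊓ K ⊔ W := (inf_sup_assoc_of_le K hW).symm
    _ = W := by rw [inf_comm, K.inf_orthogonal_eq_bot, bot_sup_eq]

end Submodule

theorem sup_orthogonal_dotProductBilin_eq_top {K ι : Type*} [Field K] [LinearOrder K]
    [IsStrictOrderedRing K] [Fintype ι] (U : Submodule K (ι → K)) :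
    U ⊔ LinearMap.BilinForm.orthogonal (dotProductBilin K K) U = ⊤ := by
  have hrefl : (dotProductBilin K K : LinearMap.BilinForm K (ι → K)).IsRefl := fun a b h => by
    rw [dotProductBilin_apply_apply] at *
    rwa [dotProduct_comm]
  refine ((LinearMap.BilinForm.isCompl_orthogonal_iff_disjoint hrefl).2 ?_).sup_eq_top
  refine disjoint_def.2 fun x hxU hx => ?_
  simpa using (LinearMap.BilinForm.mem_orthogonal_iff.1 hx) x hxU

variable {ι : Type*}

def ratVec : (ι → ℚ) →ₗ[ℚ] EuclideanSpace ℝ ι where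
  toFun y := WithLp.toLp 2 fun i => (y i : ℝ)
  map_add' a b := by ext i; simp
  map_smul' q a := by ext i; simp [Rat.smul_def]

@[simp]
theorem ratVec_apply (y : ι → ℚ) (i : ι) : ratVec y i = (y i : ℝ) := rfl

theorem mem_range_ratVec {x : EuclideanSpace ℝ ι} :
    x ∈ range ratVec ↔ ∀ i, ∃ q : ℚ, x i = q := by
  refine ⟨fun ⟨y, hy⟩ i => ⟨y i, hy ▸ rfl⟩, fun h => ?_⟩
  choose y hy using h
  exact ⟨y, by ext i; exact (hy i).symm⟩

variable [Fintype ι]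

theorem inner_ratVec (a b : ι → ℚ) : inner ℝ (ratVec a) (ratVec b) = ((a ⬝ᵥ b : ℚ) : ℝ) := by
  simp [PiLp.inner_apply, dotProduct, mul_comm]

theorem span_range_ratVec : span ℝ (range (ratVec (ι := ι))) = ⊤ := by
  classical
  refine eq_top_iff.2 ((EuclideanSpace.basisFun ι ℝ).toBasis.span_eq.ge.trans (span_mono ?_))
  rintro _ ⟨i, rfl⟩
  refine ⟨Pi.single i 1, ?_⟩
  ext j
  by_cases h : j = i <;> simp [h]

theorem orthogonal_span_le_span_inter_range_ratVec {S : Set (EuclideanSpace ℝ ι)}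
    (hS : S ⊆ range ratVec) :
    (span ℝ S)ᗮ ≤ span ℝ ((span ℝ S)ᗮ ∩ range ratVec) := by
  refine (orthogonal_eq_of_le_of_sup_eq_top (span_le.2 inter_subset_left) (eq_top_iff.2 ?_)).le
  rw [← span_range_ratVec, span_le]
  rintro _ ⟨y, rfl⟩
  set U := span ℚ (ratVec ⁻¹' S)
  obtain ⟨a, ha, b, hb, rfl⟩ :=
    mem_sup.1 ((sup_orthogonal_dotProductBilin_eq_top U).ge (mem_top (x := y)))
  rw [map_add]
  refine add_mem (mem_sup_left ?_) (mem_sup_right (subset_span ⟨?_, b, rfl⟩))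
  · have haS : ratVec a ∈ span ℚ S := by
      simpa [U, map_span, image_preimage_eq_of_subset hS] using mem_map_of_mem (f := ratVec) ha
    exact span_le_restrictScalars ℚ ℝ S haS
  · refine (isOrtho_span.2 ?_).ge (mem_span_singleton_self _)
    rintro _ hu _ rfl
    obtain ⟨t, rfl⟩ := hS hu
    have htb := LinearMap.BilinForm.mem_orthogonal_iff.1 hb t (subset_span hu)
    rw [dotProductBilin_apply_apply] at htb
    rw [inner_ratVec, htb, Rat.cast_zero]

theorem span_inter_range_ratVec_le (P : Submodule ℝ (EuclideanSpace ℝ ι)) :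
    span ℝ (P ∩ range ratVec) ≤ span ℝ {x | x ∈ P ∧ ∀ i, ∃ k : ℤ, x i = k} := by
  refine span_le.2 ?_
  rintro _ ⟨hP, y, rfl⟩
  obtain ⟨⟨N, hN⟩, hNy⟩ :=
    IsLocalization.exist_integer_multiples (nonZeroDivisors ℤ) Finset.univ y
  have hN0 : (N : ℝ) ≠ 0 := by exact_mod_cast nonZeroDivisors.ne_zero hN
  rw [SetLike.mem_coe, ← (span ℝ _).smul_mem_iff hN0]
  refine subset_span ⟨P.smul_mem _ hP, fun i => ?_⟩
  obtain ⟨k, hk⟩ := hNy i (Finset.mem_univ i)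
  refine ⟨k, ?_⟩
  simp only [algebraMap_int_eq, eq_intCast, zsmul_eq_mul] at hk
  rw [PiLp.smul_apply, ratVec_apply, smul_eq_mul]
  exact_mod_cast hk.symm

theorem orthogonal_span_le_span_integer_points {S : Set (EuclideanSpace ℝ ι)}
    (hS : ∀ x ∈ S, ∀ i, ∃ q : ℚ, x i = q) :
    (span ℝ S)ᗮ ≤ span ℝ {x | x ∈ (span ℝ S)ᗮ ∧ ∀ i, ∃ k : ℤ, x i = k} :=
  (orthogonal_span_le_span_inter_range_ratVec fun x hx => mem_range_ratVec.2 (hS x hx)).trans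
    (span_inter_range_ratVec_le _)

open EuclideanSpace in
theorem stmt_1_general (n : ℕ) (ω : EuclideanSpace ℝ (Fin n))
    (Λ : Submodule ℝ (EuclideanSpace ℝ (Fin n)))
    (hΛ : Λ = Submodule.span ℝ
      {x : EuclideanSpace ℝ (Fin n) | (∀ i, ∃ k : ℤ, x i = (k : ℝ)) ∧ inner ℝ x ω = (0 : ℝ)}) :
    ω ∈ Λᗮ ∧
    Λᗮ = Submodule.span ℝ {x : EuclideanSpace ℝ (Fin n) | x ∈ Λᗮ ∧ ∀ i, ∃ k : ℤ, x i = (k : ℝ)} ∧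
    ∀ V : Submodule ℝ (EuclideanSpace ℝ (Fin n)),
      (∃ S : Set (EuclideanSpace ℝ (Fin n)),
          (∀ x ∈ S, ∀ i, ∃ q : ℚ, x i = (q : ℝ)) ∧ V = Submodule.span ℝ S) →
      ω ∈ V → Λᗮ ≤ V := by
  set I : Set (EuclideanSpace ℝ (Fin n)) :=
    {x | (∀ i, ∃ k : ℤ, x i = (k : ℝ)) ∧ inner ℝ x ω = (0 : ℝ)}
  have hI_rat : ∀ x ∈ I, ∀ i, ∃ q : ℚ, x i = q :=
    fun x hx i => let ⟨k, hk⟩ := hx.1 i; ⟨k, by simp [hk]⟩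
  subst hΛ
  refine ⟨(isOrtho_span.2 ?_).ge (mem_span_singleton_self ω),
    (orthogonal_span_le_span_integer_points hI_rat).antisymm (span_le.2 fun x hx => hx.1), ?_⟩
  · rintro u hu _ rfl
    exact hu.2
  rintro V ⟨S, hS, rfl⟩ hωV
  have hV_le : (span ℝ S)ᗮ ≤ span ℝ I :=
    (orthogonal_span_le_span_integer_points hS).trans
      (span_mono fun x hx => ⟨hx.2, inner_left_of_mem_orthogonal hωV hx.1⟩)
  exact (orthogonal_le hV_le).trans (orthogonal_orthogonal _).le

open EuclideanSpace in
/-- Λ⊥ is the minimal rational subspace of ℝⁿ containing ω: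
    it contains ω, it is spanned by its integer points, and it is contained in any
    subspace spanned by rational vectors that contains ω. -/
theorem stmt_1 (n : ℕ) (hn : 2 ≤ n) (ω : EuclideanSpace ℝ (Fin n))
    (Λ : Submodule ℝ (EuclideanSpace ℝ (Fin n)))
    (hΛ : Λ = Submodule.span ℝ
      {x : EuclideanSpace ℝ (Fin n) | (∀ i, ∃ k : ℤ, x i = (k : ℝ)) ∧ inner ℝ x ω = (0 : ℝ)}) :
    ω ∈ Λᗮ ∧
    Λᗮ = Submodule.span ℝ {x : EuclideanSpace ℝ (Fin n) | x ∈ Λᗮ ∧ ∀ i, ∃ k : ℤ, x i = (k : ℝ)} ∧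
    ∀ V : Submodule ℝ (EuclideanSpace ℝ (Fin n)),
      (∃ S : Set (EuclideanSpace ℝ (Fin n)),
          (∀ x ∈ S, ∀ i, ∃ q : ℚ, x i = (q : ℝ)) ∧ V = Submodule.span ℝ S) →
      ω ∈ V → Λᗮ ≤ V :=
  stmt_1_general n ω Λ hΛ
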